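/- Let (L,α) be a Hom-Lie-Yamaguti superalgebra. Then Der(L) = ⊕_{k≥0} Der_{α^k}(L) is a Lie superalgebra under the supercommutator [D,D'] = DD' - (-1)^{|D||D'|}D'D. -/
import Mathlib


noncomputable section

/-- The Koszul sign `(-1)^{ij}` for parities `i j : ZMod 2`. -/
def sg (K : Type*) [Field K] (i j : ZMod 2) : K := (-1 : K) ^ (i.val * j.val)

/-- The underlying data of a Hom-Lie–Yamaguti superalgebra: a `ZMod 2`-grading,
a binary bracket, a ternary bracket and a twisting map `α`. -/
structure HLYSData (K : Type*) [Field K] (L : Type*) [AddCommGroup L] [Module K L] where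
  grade : ZMod 2 → Submodule K L
  br : L →ₗ[K] L →ₗ[K] L
  tr : L →ₗ[K] L →ₗ[K] L →ₗ[K] L
  α : L →ₗ[K] L

namespace HLYSData

variable {K : Type*} [Field K] {L : Type*} [AddCommGroup L] [Module K L]

/-- The iterate `α^k` of the structure map. -/
def pα (A : HLYSData K L) : ℕ → (L →ₗ[K] L)
  | 0 => LinearMap.id
  | n + 1 => A.α ∘ₗ A.pα n

/-- Axioms (SHLY1)–(SHLY8) of a Hom-Lie–Yamaguti superalgebra, stated on
homogeneous elements. -/
structure IsHLYS (A : HLYSData K L) : Prop where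
  grade_α : ∀ i x, x ∈ A.grade i → A.α x ∈ A.grade i
  grade_br : ∀ i j x y, x ∈ A.grade i → y ∈ A.grade j → A.br x y ∈ A.grade (i + j)
  grade_tr : ∀ i j m x y z, x ∈ A.grade i → y ∈ A.grade j → z ∈ A.grade m →
    A.tr x y z ∈ A.grade (i + j + m)
  shly1 : ∀ x y, A.α (A.br x y) = A.br (A.α x) (A.α y)
  shly2 : ∀ x y z, A.α (A.tr x y z) = A.tr (A.α x) (A.α y) (A.α z)
  shly3 : ∀ i j x y, x ∈ A.grade i → y ∈ A.grade j → A.br x y = -(sg K i j • A.br y x)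
  shly4 : ∀ i j x y z, x ∈ A.grade i → y ∈ A.grade j → A.tr x y z = -(sg K i j • A.tr y x z)
  shly5 : ∀ i j m x y z, x ∈ A.grade i → y ∈ A.grade j → z ∈ A.grade m →
    sg K i m • (A.br (A.br x y) (A.α z) + A.tr x y z)
      + sg K j i • (A.br (A.br y z) (A.α x) + A.tr y z x)
      + sg K m j • (A.br (A.br z x) (A.α y) + A.tr z x y) = 0
  shly6 : ∀ i j m n x y z u, x ∈ A.grade i → y ∈ A.grade j → z ∈ A.grade m → u ∈ A.grade n →
    sg K i m • A.tr (A.br x y) (A.α z) (A.α u)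
      + sg K j i • A.tr (A.br y z) (A.α x) (A.α u)
      + sg K m j • A.tr (A.br z x) (A.α y) (A.α u) = 0
  shly7 : ∀ i j m n x y u v, x ∈ A.grade i → y ∈ A.grade j → u ∈ A.grade m → v ∈ A.grade n →
    A.tr (A.α x) (A.α y) (A.br u v)
      = A.br (A.tr x y u) (A.α (A.α v))
        + sg K m (i + j) • A.br (A.α (A.α u)) (A.tr x y v)
  shly8 : ∀ i j m n p x y u v w, x ∈ A.grade i → y ∈ A.grade j → u ∈ A.grade m →
      v ∈ A.grade n → w ∈ A.grade p →
    A.tr (A.α (A.α x)) (A.α (A.α y)) (A.tr u v w)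
      = A.tr (A.tr x y u) (A.α (A.α v)) (A.α (A.α w))
        + sg K m (i + j) • A.tr (A.α (A.α u)) (A.tr x y v) (A.α (A.α w))
        + sg K (m + n) (i + j) • A.tr (A.α (A.α u)) (A.α (A.α v)) (A.tr x y w)

/-- `D` is a homogeneous linear map of degree `s`. -/
def IsHomog (A : HLYSData K L) (s : ZMod 2) (D : L →ₗ[K] L) : Prop :=
  ∀ i x, x ∈ A.grade i → D x ∈ A.grade (i + s)

/-- Homogeneous `α^k`-derivations of degree `s`. -/
def IsDer (A : HLYSData K L) (k : ℕ) (s : ZMod 2) (D : L →ₗ[K] L) : Prop :=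
  A.IsHomog s D ∧ (∀ x, D (A.α x) = A.α (D x)) ∧
  (∀ i j x y, x ∈ A.grade i → y ∈ A.grade j →
    D (A.br x y) = A.br (D x) (A.pα k y) + sg K s i • A.br (A.pα k x) (D y)) ∧
  (∀ i j m x y z, x ∈ A.grade i → y ∈ A.grade j → z ∈ A.grade m →
    D (A.tr x y z)
      = A.tr (D x) (A.pα k y) (A.pα k z)
        + sg K s i • A.tr (A.pα k x) (D y) (A.pα k z)
        + sg K s (i + j) • A.tr (A.pα k x) (A.pα k y) (D z))

/-- Homogeneous generalized `α^k`-derivations of degree `s`. -/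
def IsGDer (A : HLYSData K L) (k : ℕ) (s : ZMod 2) (D : L →ₗ[K] L) : Prop :=
  A.IsHomog s D ∧ ∃ D' D'' D''' : L →ₗ[K] L,
    A.IsHomog s D' ∧ A.IsHomog s D'' ∧ A.IsHomog s D''' ∧
    (∀ i j x y, x ∈ A.grade i → y ∈ A.grade j →
      A.br (D x) (A.pα k y) + sg K s i • A.br (A.pα k x) (D' y) = D'' (A.br x y)) ∧
    (∀ i j m x y z, x ∈ A.grade i → y ∈ A.grade j → z ∈ A.grade m →
      A.tr (D x) (A.pα k y) (A.pα k z)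
          + sg K s i • A.tr (A.pα k x) (D' y) (A.pα k z)
          + sg K s (i + j) • A.tr (A.pα k x) (A.pα k y) (D'' z) = D''' (A.tr x y z))

/-- Homogeneous `α^k`-quasiderivations of degree `s`. -/
def IsQDer (A : HLYSData K L) (k : ℕ) (s : ZMod 2) (D : L →ₗ[K] L) : Prop :=
  A.IsHomog s D ∧ ∃ D' D'' : L →ₗ[K] L, A.IsHomog s D' ∧ A.IsHomog s D'' ∧
    (∀ i j x y, x ∈ A.grade i → y ∈ A.grade j →
      A.br (D x) (A.pα k y) + sg K s i • A.br (A.pα k x) (D y) = D' (A.br x y)) ∧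
    (∀ i j m x y z, x ∈ A.grade i → y ∈ A.grade j → z ∈ A.grade m →
      A.tr (D x) (A.pα k y) (A.pα k z)
          + sg K s i • A.tr (A.pα k x) (D y) (A.pα k z)
          + sg K s (i + j) • A.tr (A.pα k x) (A.pα k y) (D z) = D'' (A.tr x y z))

/-- The `α^k`-centroid (homogeneous elements of degree `s`). -/
def IsCent (A : HLYSData K L) (k : ℕ) (s : ZMod 2) (D : L →ₗ[K] L) : Prop :=
  A.IsHomog s D ∧
  (∀ i j x y, x ∈ A.grade i → y ∈ A.grade j →
    A.br (D x) (A.pα k y) = D (A.br x y) ∧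
    sg K s i • A.br (A.pα k x) (D y) = D (A.br x y)) ∧
  (∀ i j m x y z, x ∈ A.grade i → y ∈ A.grade j → z ∈ A.grade m →
    A.tr (D x) (A.pα k y) (A.pα k z) = D (A.tr x y z) ∧
    sg K s i • A.tr (A.pα k x) (D y) (A.pα k z) = D (A.tr x y z) ∧
    sg K s (i + j) • A.tr (A.pα k x) (A.pα k y) (D z) = D (A.tr x y z))

/-- The `α^k`-quasicentroid (homogeneous elements of degree `s`). -/
def IsQCent (A : HLYSData K L) (k : ℕ) (s : ZMod 2) (D : L →ₗ[K] L) : Prop :=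
  A.IsHomog s D ∧
  (∀ i j x y, x ∈ A.grade i → y ∈ A.grade j →
    A.br (D x) (A.pα k y) = sg K s i • A.br (A.pα k x) (D y)) ∧
  (∀ i j m x y z, x ∈ A.grade i → y ∈ A.grade j → z ∈ A.grade m →
    A.tr (D x) (A.pα k y) (A.pα k z) = sg K s i • A.tr (A.pα k x) (D y) (A.pα k z) ∧
    A.tr (D x) (A.pα k y) (A.pα k z) = sg K s (i + j) • A.tr (A.pα k x) (A.pα k y) (D z))

/-- Central derivations (with twist `α^k`, degree `s`). -/
def IsZDer (A : HLYSData K L) (k : ℕ) (s : ZMod 2) (D : L →ₗ[K] L) : Prop :=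
  A.IsHomog s D ∧ (∀ x, D (A.α x) = A.α (D x)) ∧
  (∀ x y, A.br (D x) (A.pα k y) = 0) ∧ (∀ x y, D (A.br x y) = 0) ∧
  (∀ x y z, A.tr (D x) (A.pα k y) (A.pα k z) = 0) ∧ (∀ x y z, D (A.tr x y z) = 0)

/-- The center `Z(L)`. -/
def center (A : HLYSData K L) : Set L :=
  {x | ∀ y z, A.br x y = 0 ∧ A.tr x y z = 0}

end HLYSData

/-- The supercommutator of two endomorphisms of parities `a` and `b`. -/
def scomm (K : Type*) [Field K] {L : Type*} [AddCommGroup L] [Module K L]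
    (a b : ZMod 2) (f g : L →ₗ[K] L) : L →ₗ[K] L :=
  f ∘ₗ g - sg K a b • (g ∘ₗ f)


namespace HLYSData
variable {K : Type*} [Field K] {L : Type*} [AddCommGroup L] [Module K L]

lemma zmod2_cases (i : ZMod 2) : i = 0 ∨ i = 1 := by revert i; decide

lemma zmod2_one_add_one : (1 + 1 : ZMod 2) = 0 := rfl

lemma sg_zero_left (j : ZMod 2) : sg K 0 j = 1 := by simp [sg]
lemma sg_zero_right (i : ZMod 2) : sg K i 0 = 1 := by simp [sg]
lemma sg_one_one : sg K 1 1 = -1 := by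
  norm_num [sg, show (1:ZMod 2).val = 1 from rfl]

lemma pα_comm (A : HLYSData K L) {D : L →ₗ[K] L} (h : ∀ x, D (A.α x) = A.α (D x)) :
    ∀ n x, D (A.pα n x) = A.pα n (D x) := by
  intro n
  induction n with
  | zero => intro x; rfl
  | succ n ih => intro x; simp only [pα, LinearMap.comp_apply, h, ih]

lemma pα_add (A : HLYSData K L) (k s : ℕ) (x : L) : A.pα (k + s) x = A.pα k (A.pα s x) := by
  induction k with
  | zero => simp only [Nat.zero_add]; rfl
  | succ k ih => simp only [Nat.succ_add, pα, LinearMap.comp_apply, ih]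

lemma pα_add' (A : HLYSData K L) (k s : ℕ) (x : L) : A.pα (k + s) x = A.pα s (A.pα k x) := by
  rw [Nat.add_comm]; exact A.pα_add s k x

lemma grade_pα (A : HLYSData K L) (hα : ∀ i x, x ∈ A.grade i → A.α x ∈ A.grade i)
    (n : ℕ) (i : ZMod 2) (x : L) (hx : x ∈ A.grade i) : A.pα n x ∈ A.grade i := by
  induction n with
  | zero => exact hx
  | succ n ih => exact hα i _ ih

end HLYSData

set_option maxHeartbeats 2000000 in
/-- `Der(L) = ⊕_k Der_{α^k}(L)` is a Lie superalgebra under the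
supercommutator: it is closed under the bracket, which is super-skew-symmetric
and satisfies the super Jacobi identity. -/
theorem der_is_lie_superalgebra
    {K : Type*} [Field K] {L : Type*} [AddCommGroup L] [Module K L]
    (A : HLYSData K L) (hA : A.IsHLYS) :
    (∀ (k s : ℕ) (a b : ZMod 2) (D D' : L →ₗ[K] L),
      A.IsDer k a D → A.IsDer s b D' → A.IsDer (k + s) (a + b) (scomm K a b D D')) ∧
    (∀ (k s : ℕ) (a b : ZMod 2) (D D' : L →ₗ[K] L),
      A.IsDer k a D → A.IsDer s b D' →
      scomm K a b D D' = -(sg K a b • scomm K b a D' D)) ∧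
    (∀ (k s t : ℕ) (a b c : ZMod 2) (D D' D'' : L →ₗ[K] L),
      A.IsDer k a D → A.IsDer s b D' → A.IsDer t c D'' →
      scomm K a (b + c) D (scomm K b c D' D'')
        = scomm K (a + b) c (scomm K a b D D') D''
          + sg K a b • scomm K b (a + c) D' (scomm K a c D D'')) := by
  refine ⟨?_, ?_, ?_⟩
  · -- closure
    rintro k s a b D D' ⟨hDg, hDa, hDb, hDt⟩ ⟨hD'g, hD'a, hD'b, hD't⟩
    refine ⟨?_, ?_, ?_, ?_⟩
    · -- homogeneous
      intro i x hx
      have h1 : D (D' x) ∈ A.grade (i + b + a) := hDg _ _ (hD'g i x hx)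
      have h2 : D' (D x) ∈ A.grade (i + a + b) := hD'g _ _ (hDg i x hx)
      show D (D' x) - sg K a b • D' (D x) ∈ A.grade (i + (a + b))
      rw [show i + (a + b) = i + b + a from by ring]
      exact sub_mem h1 (Submodule.smul_mem _ _
        (by rw [show i + b + a = i + a + b from by ring]; exact h2))
    · -- commutes with α
      intro x
      show D (D' (A.α x)) - sg K a b • D' (D (A.α x))
        = A.α (D (D' x) - sg K a b • D' (D x))
      rw [hD'a, hDa, hDa, hD'a, map_sub, map_smul]
    · -- binary bracket
      intro i j x y hx hy
      have hpxs : A.pα s x ∈ A.grade i := A.grade_pα hA.grade_α s i x hx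
      have hpys : A.pα s y ∈ A.grade j := A.grade_pα hA.grade_α s j y hy
      have hpxk : A.pα k x ∈ A.grade i := A.grade_pα hA.grade_α k i x hx
      have hpyk : A.pα k y ∈ A.grade j := A.grade_pα hA.grade_α k j y hy
      have hD'x : D' x ∈ A.grade (i + b) := hD'g i x hx
      have hD'y : D' y ∈ A.grade (j + b) := hD'g j y hy
      have hDx : D x ∈ A.grade (i + a) := hDg i x hx
      have hDy : D y ∈ A.grade (j + a) := hDg j y hy
      simp only [scomm, LinearMap.sub_apply, LinearMap.smul_apply, LinearMap.comp_apply]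
      rw [hD'b i j x y hx hy, hDb i j x y hx hy]
      simp only [map_add, map_smul]
      rw [hDb (i + b) j _ _ hD'x hpys, hDb i (j + b) _ _ hpxs hD'y,
        hD'b (i + a) j _ _ hDx hpyk, hD'b i (j + a) _ _ hpxk hDy]
      simp only [A.pα_comm hDa, A.pα_comm hD'a, ← A.pα_add, ← A.pα_add']
      simp only [map_sub, map_smul, LinearMap.sub_apply, LinearMap.smul_apply,
        Nat.add_comm s k]
      rcases HLYSData.zmod2_cases a with ha | ha <;> rcases HLYSData.zmod2_cases b with hb | hb <;>
        rcases HLYSData.zmod2_cases i with hi | hi <;> subst ha hb hi <;>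
        simp only [HLYSData.sg_zero_left, HLYSData.sg_zero_right, HLYSData.sg_one_one, HLYSData.zmod2_one_add_one,
          add_zero, zero_add, one_smul] <;>
        module
    · -- ternary bracket
      intro i j m x y z hx hy hz
      have hpxs : A.pα s x ∈ A.grade i := A.grade_pα hA.grade_α s i x hx
      have hpys : A.pα s y ∈ A.grade j := A.grade_pα hA.grade_α s j y hy
      have hpzs : A.pα s z ∈ A.grade m := A.grade_pα hA.grade_α s m z hz
      have hpxk : A.pα k x ∈ A.grade i := A.grade_pα hA.grade_α k i x hx
      have hpyk : A.pα k y ∈ A.grade j := A.grade_pα hA.grade_α k j y hy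
      have hpzk : A.pα k z ∈ A.grade m := A.grade_pα hA.grade_α k m z hz
      have hD'x : D' x ∈ A.grade (i + b) := hD'g i x hx
      have hD'y : D' y ∈ A.grade (j + b) := hD'g j y hy
      have hD'z : D' z ∈ A.grade (m + b) := hD'g m z hz
      have hDx : D x ∈ A.grade (i + a) := hDg i x hx
      have hDy : D y ∈ A.grade (j + a) := hDg j y hy
      have hDz : D z ∈ A.grade (m + a) := hDg m z hz
      simp only [scomm, LinearMap.sub_apply, LinearMap.smul_apply, LinearMap.comp_apply]
      rw [hD't i j m x y z hx hy hz, hDt i j m x y z hx hy hz]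
      simp only [map_add, map_smul]
      rw [hDt (i + b) j m _ _ _ hD'x hpys hpzs, hDt i (j + b) m _ _ _ hpxs hD'y hpzs,
        hDt i j (m + b) _ _ _ hpxs hpys hD'z,
        hD't (i + a) j m _ _ _ hDx hpyk hpzk, hD't i (j + a) m _ _ _ hpxk hDy hpzk,
        hD't i j (m + a) _ _ _ hpxk hpyk hDz]
      simp only [A.pα_comm hDa, A.pα_comm hD'a, ← A.pα_add, ← A.pα_add']
      simp only [map_sub, map_smul, LinearMap.sub_apply, LinearMap.smul_apply,
        Nat.add_comm s k]
      rcases HLYSData.zmod2_cases a with ha | ha <;> rcases HLYSData.zmod2_cases b with hb | hb <;>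
        rcases HLYSData.zmod2_cases i with hi | hi <;> rcases HLYSData.zmod2_cases j with hj | hj <;>
        subst ha hb hi hj <;>
        simp only [HLYSData.sg_zero_left, HLYSData.sg_zero_right, HLYSData.sg_one_one, HLYSData.zmod2_one_add_one,
          add_zero, zero_add, one_smul] <;>
        module
  · -- skew-symmetry
    intro k s a b D D' _ _
    rcases HLYSData.zmod2_cases a with ha | ha <;> rcases HLYSData.zmod2_cases b with hb | hb <;>
      subst ha hb <;> ext x <;>
      simp [scomm, HLYSData.sg_zero_left, HLYSData.sg_zero_right, HLYSData.sg_one_one, sub_smul, smul_sub]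
  · -- Jacobi
    intro k s t a b c D D' D'' _ _ _
    rcases HLYSData.zmod2_cases a with ha | ha <;> rcases HLYSData.zmod2_cases b with hb | hb <;>
      rcases HLYSData.zmod2_cases c with hc | hc <;> subst ha hb hc <;> ext x <;>
      simp [scomm, HLYSData.sg_zero_left, HLYSData.sg_zero_right, HLYSData.sg_one_one, HLYSData.zmod2_one_add_one,
        sub_smul, smul_sub] <;>
      module
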